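/- arXiv:2402.07833 — 9 statements merged into one kernel-verified Lean document; each statement's English description precedes it below -/
import Mathlib

section
/- For n odd and m even, if a tuple u in (Z/mZ)^n has a predecessor under the Ducci map D, then it has exactly two predecessors; moreover if (x_1,...,x_n) is one predecessor, the other is (x_1+m/2, ..., x_n+m/2). -/
/-- The Ducci map on `(ZMod m)^n`. -/
def ducci (m n : ℕ) [NeZero n] (v : Fin n → ZMod m) : Fin n → ZMod m :=
  fun i => v i + v (i + 1)

/-!
The Ducci map is additive, so the predecessors of `u` form a coset of its kernel. A kernel
element satisfies `v (i + 1) = -v i`; walking once around the odd cycle gives `v 0 = -v 0`,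
hence `v` is a constant `c` with `2c = 0`. In `ZMod m` with `m` even the only such `c` are `0`
and `m / 2`, and these are distinct.
-/

namespace ZMod

theorem natCast_half_ne_zero {m : ℕ} (hm : Even m) (hm0 : m ≠ 0) :
    ((m / 2 : ℕ) : ZMod m) ≠ 0 := by
  obtain ⟨k, rfl⟩ := hm
  rw [Ne, natCast_eq_zero_iff]
  intro hdvd
  have := Nat.eq_zero_of_dvd_of_lt hdvd (by omega)
  omega

theorem add_self_eq_zero_iff {m : ℕ} (hm : Even m) (hm0 : m ≠ 0) (c : ZMod m) :
    c + c = 0 ↔ c = 0 ∨ c = ((m / 2 : ℕ) : ZMod m) := by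
  obtain ⟨k, rfl⟩ := hm.two_dvd
  have : NeZero (2 * k) := ⟨hm0⟩
  have hc := c.val_lt
  have hdvd : c + c = 0 ↔ k ∣ c.val := by
    have hcast : c + c = ((2 * c.val : ℕ) : ZMod (2 * k)) := by push_cast [natCast_zmod_val]; ring
    rw [hcast, natCast_eq_zero_iff, Nat.mul_dvd_mul_iff_left two_pos]
  rw [hdvd, Nat.mul_div_cancel_left k two_pos, ← (val_injective _).eq_iff,
    ← (val_injective _).eq_iff, val_zero, val_natCast_of_lt (by omega : k < 2 * k)]
  constructor
  · rintro ⟨j, hj⟩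
    have : j < 2 := by
      by_contra!
      nlinarith
    interval_cases j <;> omega
  · rintro (h | h) <;> simp [h]

end ZMod

section Ducci

variable {m n : ℕ} [NeZero n]

theorem ducci_sub (v w : Fin n → ZMod m) : ducci m n (v - w) = ducci m n v - ducci m n w := by
  ext i
  simp only [ducci, Pi.sub_apply]
  abel

open Fin.NatCast in
theorem ducci_eq_zero_iff (hn : Odd n) (v : Fin n → ZMod m) :
    ducci m n v = 0 ↔ ∃ c : ZMod m, c + c = 0 ∧ v = fun _ => c := by
  refine ⟨fun h => ?_, fun ⟨c, hc, hv⟩ => hv ▸ funext fun _ => hc⟩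
  have hstep : ∀ i, v (i + 1) = -v i := fun i => eq_neg_of_add_eq_zero_right (congrFun h i)
  have hpow : ∀ k : ℕ, v k = (-1) ^ k * v 0 := by
    intro k
    induction k with
    | zero => simp
    | succ k ih => rw [Nat.cast_succ, hstep, ih, pow_succ]; ring
  have hneg : -v 0 = v 0 := by
    simpa [Fin.natCast_self, hn.neg_one_pow] using (hpow n).symm
  refine ⟨v 0, neg_eq_iff_add_eq_zero.mp hneg, funext fun i => ?_⟩
  rw [← Fin.cast_val_eq_self i, hpow]
  rcases neg_one_pow_eq_or (ZMod m) i.val with h | h <;> simp [h, hneg]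

theorem ducci_eq_ducci_iff (hn : Odd n) (v x : Fin n → ZMod m) :
    ducci m n v = ducci m n x ↔ ∃ c : ZMod m, c + c = 0 ∧ v = fun i => x i + c := by
  rw [← sub_eq_zero, ← ducci_sub, ducci_eq_zero_iff hn]
  simp only [funext_iff, Pi.add_apply, sub_eq_iff_eq_add']

end Ducci

theorem ducci_two_predecessors (m n : ℕ) [NeZero n] (hn : Odd n) (hm : Even m)
    (hm0 : 0 < m) (u : Fin n → ZMod m) (h : ∃ v, ducci m n v = u) :
    {v | ducci m n v = u}.ncard = 2 ∧
      ∀ x, ducci m n x = u →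
        {v | ducci m n v = u} = {x, fun i => x i + (m / 2 : ℕ)} := by
  have hpred : ∀ x, ducci m n x = u →
      {v | ducci m n v = u} = {x, fun i => x i + (m / 2 : ℕ)} := by
    rintro x rfl
    ext v
    simp [ducci_eq_ducci_iff hn, ZMod.add_self_eq_zero_iff hm hm0.ne', or_and_right, exists_or]
  refine ⟨?_, hpred⟩
  obtain ⟨x, hx⟩ := h
  rw [hpred x hx]
  refine Set.ncard_pair fun heq => ZMod.natCast_half_ne_zero hm hm0.ne' ?_
  simpa using congrFun heq 0
end

section
/- For n odd and m odd, the tuple (0,0,...,0,1) in (Z/mZ)^n lies in the image of D^k for every k ≥ 0; equivalently, the basic Ducci sequence has length 0 (i.e., (0,...,0,1) lies in a Ducci cycle). -/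
/-- The basic tuple `(0,0,...,0,1)`. -/
def basicTuple (m n : ℕ) : Fin n → ZMod m :=
  fun i => if i.val = n - 1 then 1 else 0

open Function

section AlternatingTuple

variable {R : Type*} [CommRing R] {n : ℕ} [NeZero n] {u : Fin n → R}

open Fin.NatCast in
lemma apply_natCast_eq_neg_one_pow_mul_of_add_succ_eq_zero
    (h : ∀ i, u i + u (i + 1) = 0) (k : ℕ) : u k = (-1) ^ k * u 0 := by
  induction k with
  | zero => simp
  | succ k ih =>
    have hk : u ((k : Fin n) + 1) = -u k := eq_neg_of_add_eq_zero_right (h k)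
    rw [Nat.cast_succ, hk, ih, pow_succ]
    ring

lemma eq_zero_of_add_succ_eq_zero (hn : Odd n) (h2 : IsUnit (2 : R))
    (h : ∀ i, u i + u (i + 1) = 0) : u = 0 := by
  have hu0 : u 0 = 0 := by
    have hcycle := apply_natCast_eq_neg_one_pow_mul_of_add_succ_eq_zero h n
    rw [Fin.natCast_self, hn.neg_one_pow] at hcycle
    exact h2.mul_right_eq_zero.mp (by linear_combination hcycle)
  funext i
  simpa [hu0] using apply_natCast_eq_neg_one_pow_mul_of_add_succ_eq_zero h i.val

end AlternatingTuple

lemma ZMod.isUnit_two_of_odd {m : ℕ} (hm : Odd m) : IsUnit (2 : ZMod m) := by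
  simpa using (ZMod.isUnit_iff_coprime 2 m).mpr (Nat.coprime_two_left.mpr hm)

lemma ducci_injective {m n : ℕ} [NeZero n] (hn : Odd n) (hm : Odd m) :
    Injective (ducci m n) := by
  intro v w hvw
  refine sub_eq_zero.mp (eq_zero_of_add_succ_eq_zero hn (ZMod.isUnit_two_of_odd hm) fun i => ?_)
  have hi := congrFun hvw i
  simp only [ducci, Pi.sub_apply] at hi ⊢
  linear_combination hi

theorem basic_tuple_periodic_of_odd (m n : ℕ) [NeZero n] (hn : Odd n) (hm : Odd m) :
    ∃ t > 0, (ducci m n)^[t] (basicTuple m n) = basicTuple m n := by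
  have : NeZero m := ⟨hm.pos.ne'⟩
  exact (ducci_injective hn hm).mem_periodicPts (basicTuple m n)
end

section
/- Let a_r, b_r, c_r be defined by a_0=1, b_0=c_0=0, a_{r+1}=a_r+c_r, b_{r+1}=b_r+a_r, c_{r+1}=c_r+b_r. Then for l ≥ 2: if l ≡ 0 mod 3, a_l = 2a_{l-1} = 2c_{l-1}; if l ≡ 1 mod 3, c_l = 2c_{l-1} = 2b_{l-1}; if l ≡ 2 mod 3, b_l = 2b_{l-1} = 2a_{l-1}. -/
theorem ducci_coefficients_doubling (a b c : ℕ → ℤ)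
    (ha0 : a 0 = 1) (hb0 : b 0 = 0) (hc0 : c 0 = 0)
    (ha : ∀ r, a (r + 1) = a r + c r)
    (hb : ∀ r, b (r + 1) = b r + a r)
    (hc : ∀ r, c (r + 1) = c r + b r) :
    ∀ l : ℕ, 2 ≤ l →
      (l % 3 = 0 → a l = 2 * a (l - 1) ∧ a l = 2 * c (l - 1)) ∧
      (l % 3 = 1 → c l = 2 * c (l - 1) ∧ c l = 2 * b (l - 1)) ∧
      (l % 3 = 2 → b l = 2 * b (l - 1) ∧ b l = 2 * a (l - 1)) := by
  have inv : ∀ r : ℕ, (r % 3 = 0 → c r = b r) ∧ (r % 3 = 1 → b r = a r) ∧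
      (r % 3 = 2 → a r = c r) := by
    intro r
    induction r with
    | zero => simp [hb0, hc0]
    | succ n ih =>
      obtain ⟨h0, h1, h2⟩ := ih
      refine ⟨?_, ?_, ?_⟩ <;> intro h <;>
        [ (have := h2 (by omega); rw [hc n, hb n, this]; ring);
          (have := h0 (by omega); rw [hb n, ha n, this]; ring);
          (have := h1 (by omega); rw [ha n, hc n, this]; ring) ]
  intro l hl
  obtain ⟨m, rfl⟩ : ∃ m, l = m + 1 := ⟨l - 1, by omega⟩
  obtain ⟨h0, h1, h2⟩ := inv m
  refine ⟨?_, ?_, ?_⟩ <;> intro h <;> simp only [Nat.add_sub_cancel]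
  · have := h2 (by omega); rw [ha m, this]; exact ⟨by rw [← this]; ring, by ring⟩
  · have := h0 (by omega); rw [hc m, this]; exact ⟨by rw [← this]; ring, by ring⟩
  · have := h1 (by omega); rw [hb m, this]; exact ⟨by rw [← this]; ring, by ring⟩
end

section
/- For n = 3 and m ≥ 3, the period P_m(3) of the basic Ducci sequence of (0,0,1) in (Z/mZ)^3 is divisible by 6. -/
/-- The Ducci map on `(ZMod m)^3`. -/
def ducci3 (m : ℕ) : ZMod m × ZMod m × ZMod m → ZMod m × ZMod m × ZMod m :=
  fun ⟨x, y, z⟩ => (x + y, y + z, z + x)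

/-- Difference vector. -/
def diff3 (m : ℕ) : ZMod m × ZMod m × ZMod m → ZMod m × ZMod m × ZMod m :=
  fun ⟨x, y, z⟩ => (x - y, y - z, z - x)

/-- Signed cyclic shift. -/
def sft (m : ℕ) : ZMod m × ZMod m × ZMod m → ZMod m × ZMod m × ZMod m :=
  fun ⟨a, b, c⟩ => (-c, -a, -b)

lemma diff_ducci (m : ℕ) (v : ZMod m × ZMod m × ZMod m) :
    diff3 m (ducci3 m v) = sft m (diff3 m v) := by
  obtain ⟨x, y, z⟩ := v
  simp only [diff3, ducci3, sft, Prod.mk.injEq]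
  refine ⟨by ring, by ring, by ring⟩

lemma diff_iter (m n : ℕ) (v : ZMod m × ZMod m × ZMod m) :
    diff3 m ((ducci3 m)^[n] v) = (sft m)^[n] (diff3 m v) := by
  induction n with
  | zero => rfl
  | succ n ih =>
      rw [Function.iterate_succ_apply', Function.iterate_succ_apply',
        diff_ducci, ih]

lemma sft_six (m : ℕ) : (sft m)^[6] = id := by
  funext v
  obtain ⟨a, b, c⟩ := v
  simp only [Function.iterate_succ, Function.iterate_zero, Function.comp_apply,
    id_eq, sft, neg_neg]

lemma sft_mod (m n : ℕ) (v : ZMod m × ZMod m × ZMod m) :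
    (sft m)^[n] v = (sft m)^[n % 6] v := by
  conv_lhs => rw [← Nat.div_add_mod n 6]
  rw [Function.iterate_add_apply, Function.iterate_mul, sft_six,
    Function.iterate_id, id_eq]

lemma key (m : ℕ) (h1 : (1 : ZMod m) ≠ 0) (h2 : (2 : ZMod m) ≠ 0)
    {r s : ℕ} (hr : r < 6) (hs : s < 6)
    (h : (sft m)^[r] ((0 : ZMod m), -1, 1) = (sft m)^[s] ((0 : ZMod m), -1, 1)) :
    r = s := by
  interval_cases r <;> interval_cases s <;>
    simp only [Function.iterate_succ, Function.iterate_zero, Function.comp_apply,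
      id_eq, sft, neg_neg, neg_zero, Prod.mk.injEq] at h <;>
    first
      | rfl
      | (exfalso; first
          | exact h1 (by linear_combination h.1)
          | exact h1 (by linear_combination -h.1)
          | exact h1 (by linear_combination h.2.1)
          | exact h1 (by linear_combination -h.2.1)
          | exact h1 (by linear_combination h.2.2)
          | exact h1 (by linear_combination -h.2.2)
          | exact h2 (by linear_combination h.1)
          | exact h2 (by linear_combination -h.1)
          | exact h2 (by linear_combination h.2.1)
          | exact h2 (by linear_combination -h.2.1)
          | exact h2 (by linear_combination h.2.2)
          | exact h2 (by linear_combination -h.2.2))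

theorem six_dvd_period (m k : ℕ) (hm : 3 ≤ m)
    (hk : IsLeast {k : ℕ | 0 < k ∧
      ∃ l, (ducci3 m)^[l + k] (0, 0, 1) = (ducci3 m)^[l] (0, 0, 1)} k) :
    6 ∣ k := by
  obtain ⟨⟨hkpos, l, hl⟩, -⟩ := hk
  have hm0 : NeZero m := ⟨by omega⟩
  have h1 : (1 : ZMod m) ≠ 0 := by
    intro h
    have := (ZMod.natCast_eq_zero_iff 1 m).mp (by exact_mod_cast h)
    have := Nat.le_of_dvd one_pos this
    omega
  have h2 : (2 : ZMod m) ≠ 0 := by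
    intro h
    have := (ZMod.natCast_eq_zero_iff 2 m).mp (by exact_mod_cast h)
    have := Nat.le_of_dvd (by norm_num) this
    omega
  have hd : (sft m)^[l + k] ((0 : ZMod m), -1, 1) = (sft m)^[l] ((0 : ZMod m), -1, 1) := by
    have := congrArg (diff3 m) hl
    rw [diff_iter, diff_iter] at this
    have hv : diff3 m ((0 : ZMod m), 0, 1) = ((0 : ZMod m), -1, 1) := by
      simp [diff3]
    rwa [hv] at this
  rw [sft_mod, sft_mod m l] at hd
  have := key m h1 h2 (Nat.mod_lt _ (by norm_num)) (Nat.mod_lt _ (by norm_num)) hd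
  omega
end

section
/- For n = 3 and m = 2^l · m_1 with m_1 odd, the length L_m(3) of the basic Ducci sequence equals l; that is, the minimal l' such that D^{l'}(0,0,1) is periodic under D in (Z/mZ)^3 equals l. -/
/-!
The Ducci map `D` doubles the coordinate sum `s`, and `D⁶ = I + 21 J` with `J` the all-ones
matrix, i.e. `D⁶ v = v + 21 s(v) (1,1,1)`. After `l` steps the coordinate sum is divisible by
`2 ^ l`, so further applications of `D⁶` add `2 ^ l · 21 · (1 + 64 + ⋯ + 64 ^ (j - 1))` times
`(1,1,1)`, and for suitable `j > 0` the geometric sum is divisible by the odd part `m₁`.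
Conversely, comparing coordinate sums, a return `D^(l' + k) (0,0,1) = D^l' (0,0,1)` forces
`2 ^ l ∣ 2 ^ l' (2 ^ k - 1)`, hence `l ≤ l'`.
-/
open Finset

theorem Nat.exists_pos_dvd_geom_sum {a n : ℕ} (ha : 1 < a) (h : a.Coprime n) :
    ∃ j > 0, n ∣ ∑ i ∈ range j, a ^ i := by
  have hn : n ≠ 0 := by
    rintro rfl
    exact ha.ne' (Nat.coprime_zero_right a |>.mp h)
  have hcop : a.Coprime ((a - 1) * n) :=
    Nat.Coprime.mul_right ((Nat.coprime_self_sub_right ha.le).mpr (Nat.coprime_one_right a)) h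
  -- Euler's theorem modulo `(a - 1) * n`, since `(a - 1) * ∑ i < j, a ^ i = a ^ j - 1`.
  refine ⟨Nat.totient ((a - 1) * n), Nat.totient_pos.mpr (Nat.mul_pos (by omega) hn.bot_lt), ?_⟩
  have hgeom := geom_sum_mul_add (a - 1) (Nat.totient ((a - 1) * n))
  rw [Nat.sub_add_cancel ha.le, mul_comm] at hgeom
  have hdvd : (a - 1) * n ∣ (a - 1) * ∑ i ∈ range (Nat.totient ((a - 1) * n)), a ^ i := by
    have := (Nat.modEq_iff_dvd' (Nat.one_le_pow _ _ (by omega))).mp (Nat.ModEq.pow_totient hcop).symm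
    rwa [← hgeom, Nat.add_sub_cancel] at this
  exact Nat.dvd_of_mul_dvd_mul_left (by omega) hdvd

theorem le_of_two_pow_add_eq_two_pow {m l l' k : ℕ} (hl : 2 ^ l ∣ m) (hk : 0 < k)
    (h : (2 : ZMod m) ^ (l' + k) = 2 ^ l') : l ≤ l' := by
  have hmod : 2 ^ l' ≡ 2 ^ (l' + k) [MOD 2 ^ l] := by
    refine Nat.ModEq.of_dvd hl ?_
    rw [← ZMod.natCast_eq_natCast_iff]
    push_cast
    exact h.symm
  have hdvd : 2 ^ l ∣ 2 ^ l' * (2 ^ k - 1) := by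
    rw [Nat.mul_sub, mul_one, ← pow_add]
    exact (Nat.modEq_iff_dvd' (Nat.pow_le_pow_right two_pos (Nat.le_add_right _ _))).mp hmod
  have hodd : Odd (2 ^ k - 1) :=
    Nat.Even.sub_odd Nat.one_le_two_pow ((Nat.even_pow).mpr ⟨even_two, hk.ne'⟩) odd_one
  have hcop : Nat.Coprime (2 ^ l) (2 ^ k - 1) := (Nat.coprime_two_left.mpr hodd).pow_left l
  exact (Nat.pow_dvd_pow_iff_le_right one_lt_two).mp (hcop.dvd_of_dvd_mul_right hdvd)

section Ducci

variable {m : ℕ}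

def coordSum (v : ZMod m × ZMod m × ZMod m) : ZMod m := v.1 + v.2.1 + v.2.2

theorem coordSum_ducci3 (v : ZMod m × ZMod m × ZMod m) :
    coordSum (ducci3 m v) = 2 * coordSum v := by
  obtain ⟨x, y, z⟩ := v
  simp only [ducci3, coordSum]
  ring

theorem coordSum_iterate_ducci3 (n : ℕ) (v : ZMod m × ZMod m × ZMod m) :
    coordSum ((ducci3 m)^[n] v) = 2 ^ n * coordSum v := by
  induction n with
  | zero => simp
  | succ n ih => rw [Function.iterate_succ_apply', coordSum_ducci3, ih, pow_succ]; ring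

theorem iterate_six_ducci3 (v : ZMod m × ZMod m × ZMod m) :
    (ducci3 m)^[6] v = v + (21 * coordSum v) • (1, 1, 1) := by
  obtain ⟨x, y, z⟩ := v
  simp only [Function.iterate_succ, Function.iterate_zero, Function.comp_apply, id, ducci3,
    coordSum, Prod.smul_mk, smul_eq_mul, Prod.mk_add_mk, mul_one]
  refine Prod.ext ?_ (Prod.ext ?_ ?_) <;> ring

theorem iterate_six_mul_ducci3 (j : ℕ) (v : ZMod m × ZMod m × ZMod m) :
    (ducci3 m)^[6 * j] v = v + ((21 * ∑ i ∈ range j, 64 ^ i : ℕ) * coordSum v) • (1, 1, 1) := by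
  induction j with
  | zero => simp
  | succ j ih =>
    rw [mul_add, mul_one, add_comm, Function.iterate_add_apply, iterate_six_ducci3,
      coordSum_iterate_ducci3, ih, sum_range_succ, add_assoc, ← add_smul]
    push_cast
    rw [pow_mul]
    norm_num
    ring

theorem exists_iterate_add_eq_iterate_ducci3 {l m₁ : ℕ} (hm₁ : Odd m₁) (hm : m ∣ 2 ^ l * m₁) :
    ∃ k > 0, ∀ v, (ducci3 m)^[l + k] v = (ducci3 m)^[l] v := by
  obtain ⟨j, hj, hdvd⟩ := Nat.exists_pos_dvd_geom_sum (a := 64) (by norm_num)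
    (show (2 ^ 6).Coprime m₁ from (Nat.coprime_two_left.mpr hm₁).pow_left 6)
  refine ⟨6 * j, by positivity, fun v => ?_⟩
  have hzero : ((21 * ∑ i ∈ range j, 64 ^ i : ℕ) : ZMod m) * 2 ^ l = 0 := by
    have hdvd' : m ∣ (21 * ∑ i ∈ range j, 64 ^ i) * 2 ^ l :=
      hm.trans (by rw [mul_comm]; exact mul_dvd_mul_right (dvd_mul_of_dvd_right hdvd 21) _)
    exact_mod_cast (ZMod.natCast_eq_zero_iff _ m).mpr hdvd'
  rw [add_comm, Function.iterate_add_apply, iterate_six_mul_ducci3, coordSum_iterate_ducci3,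
    ← mul_assoc, hzero, zero_mul, zero_smul, add_zero]

end Ducci

theorem length_eq_two_adic_val (m l m₁ : ℕ) (hm₁ : Odd m₁) (hm : m = 2 ^ l * m₁) :
    IsLeast {l' : ℕ | ∃ k > 0,
      (ducci3 m)^[l' + k] (0, 0, 1) = (ducci3 m)^[l'] (0, 0, 1)} l := by
  constructor
  · obtain ⟨k, hk, hper⟩ := exists_iterate_add_eq_iterate_ducci3 hm₁ (dvd_of_eq hm)
    exact ⟨k, hk, hper _⟩
  · rintro l' ⟨k, hk, hper⟩
    have hsum := congrArg coordSum hper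
    rw [coordSum_iterate_ducci3, coordSum_iterate_ducci3] at hsum
    exact le_of_two_pow_add_eq_two_pow (hm ▸ dvd_mul_right _ _) hk (by simpa [coordSum] using hsum)
end

section
/- Let p be a prime with p ≡ 5 mod 6. Then for every u in (Z/pZ)^3, D^{p-1}(u) = H^2(u), where H(x,y,z)=(y,z,x). -/
namespace DucciAux

/-- The shift matrix. -/
def Hm (p : ℕ) : Matrix (Fin 3) (Fin 3) (ZMod p) := !![0,1,0;0,0,1;1,0,0]

/-- The Ducci matrix. -/
def Mm (p : ℕ) : Matrix (Fin 3) (Fin 3) (ZMod p) := 1 + Hm p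

lemma Mm_def (p : ℕ) : Mm p = 1 + Hm p := rfl

lemma H_cube (p : ℕ) : (Hm p)^3 = 1 := by
  rw [pow_succ, pow_two]
  ext i j
  fin_cases i <;> fin_cases j <;>
    simp [Hm, Matrix.mul_apply, Fin.sum_univ_three, Matrix.one_apply,
      Matrix.vecHead, Matrix.vecTail]

lemma A_mul_M (p : ℕ) : (1 - Hm p + (Hm p)^2) * Mm p = (2 : ZMod p) • 1 := by
  rw [pow_two]
  ext i j
  fin_cases i <;> fin_cases j <;>
    simp [Hm, Mm, Matrix.mul_apply, Fin.sum_univ_three, Matrix.one_apply,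
      Matrix.vecHead, Matrix.vecTail] <;> ring

lemma M_mul_A (p : ℕ) : Mm p * (1 - Hm p + (Hm p)^2) = (2 : ZMod p) • 1 := by
  rw [pow_two]
  ext i j
  fin_cases i <;> fin_cases j <;>
    simp [Hm, Mm, Matrix.mul_apply, Fin.sum_univ_three, Matrix.one_apply,
      Matrix.vecHead, Matrix.vecTail] <;> ring

lemma iter_eq (p : ℕ) (n : ℕ) (u : ZMod p × ZMod p × ZMod p) :
    (ducci3 p)^[n] u =
      (((Mm p)^n).mulVec ![u.1, u.2.1, u.2.2] 0,
       ((Mm p)^n).mulVec ![u.1, u.2.1, u.2.2] 1,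
       ((Mm p)^n).mulVec ![u.1, u.2.1, u.2.2] 2) := by
  induction n with
  | zero =>
      simp [Matrix.one_mulVec, Matrix.mulVec, dotProduct,
        Fin.sum_univ_three, Matrix.one_apply]
  | succ n ih =>
      rw [Function.iterate_succ_apply', ih, pow_succ']
      rw [← Matrix.mulVec_mulVec]
      simp [ducci3, Mm, Hm, Matrix.mulVec, dotProduct,
        Fin.sum_univ_three, Matrix.one_apply]
      ring_nf

lemma M_pow_p_sub_one (p : ℕ) (hp : p.Prime) (hp5 : p % 6 = 5) :
    (Mm p)^(p - 1) = (Hm p)^2 := by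
  haveI : Fact p.Prime := ⟨hp⟩
  have hp3 : p % 3 = 2 := by omega
  have hMp : (Mm p)^p = (Hm p)^2 * Mm p := by
    have hcomm : Commute (1 : Matrix (Fin 3) (Fin 3) (ZMod p)) (Hm p) := Commute.one_left _
    have := add_pow_char_of_commute p hcomm
    rw [Mm_def, this, one_pow]
    have hd : p = 3 * (p / 3) + 2 := by omega
    have hHp : (Hm p)^p = (Hm p)^2 := by
      have h1 : (Hm p)^(3*(p/3)+2) = (Hm p)^2 := by
        rw [pow_add, pow_mul, H_cube, one_pow, one_mul]
      rw [← hd] at h1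
      exact h1
    rw [hHp, mul_add, mul_one, ← pow_succ, H_cube]
    exact (add_comm _ _)
  have h2 : (2 : ZMod p) ≠ 0 := by
    have hpd : ¬ (p ∣ 2) := by
      intro h
      have := Nat.le_of_dvd (by norm_num) h
      omega
    have : ((2 : ℕ) : ZMod p) ≠ 0 := by
      rwa [Ne, ZMod.natCast_eq_zero_iff]
    simpa using this
  set N : Matrix (Fin 3) (Fin 3) (ZMod p) :=
    (2 : ZMod p)⁻¹ • (1 - Hm p + (Hm p)^2) with hN
  have hMN : Mm p * N = 1 := by
    rw [hN, Matrix.mul_smul, M_mul_A, smul_smul, inv_mul_cancel₀ h2, one_smul]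
  have hstep : (Mm p)^(p - 1) * Mm p = (Hm p)^2 * Mm p := by
    rw [← pow_succ]
    have : p - 1 + 1 = p := Nat.succ_pred_eq_of_pos hp.pos
    rw [this, hMp]
  calc (Mm p)^(p-1) = (Mm p)^(p-1) * (Mm p * N) := by rw [hMN, mul_one]
    _ = ((Mm p)^(p-1) * Mm p) * N := by rw [mul_assoc]
    _ = ((Hm p)^2 * Mm p) * N := by rw [hstep]
    _ = (Hm p)^2 * (Mm p * N) := by rw [mul_assoc]
    _ = (Hm p)^2 := by rw [hMN, mul_one]

end DucciAux

theorem ducci_pow_p_sub_one_eq_shift_sq (p : ℕ) (hp : p.Prime) (hp5 : p % 6 = 5)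
    (u : ZMod p × ZMod p × ZMod p) :
    (ducci3 p)^[p - 1] u = (u.2.2, u.1, u.2.1) := by
  rw [DucciAux.iter_eq, DucciAux.M_pow_p_sub_one p hp hp5]
  rw [pow_two]
  simp [DucciAux.Hm, Matrix.mulVec, dotProduct, Fin.sum_univ_three,
    Matrix.mul_apply]
end

section
/- Let p be a prime with p ≡ 1 mod 6. Then D^{p-1}(0,0,1) = (0,0,1) in (Z/pZ)^3; consequently the period P_p(3) divides p-1. -/
theorem period_dvd_p_sub_one (p : ℕ) (hp : p.Prime) (hp1 : p % 6 = 1) :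
    (ducci3 p)^[p - 1] (0, 0, 1) = (0, 0, 1) ∧
      ∀ k : ℕ, IsLeast {k : ℕ | 0 < k ∧
          ∃ l, (ducci3 p)^[l + k] (0, 0, 1) = (ducci3 p)^[l] (0, 0, 1)} k →
        k ∣ p - 1 := by
  haveI : Fact p.Prime := ⟨hp⟩
  have hp2 : 2 ≤ p := hp.two_le
  have hp7 : 7 ≤ p := by
    rcases Nat.lt_or_ge p 7 with h | h
    · interval_cases p <;> simp_all
    · exact h
  have h2 : (2 : ZMod p) ≠ 0 := by
    have : ((2 : ℕ) : ZMod p) ≠ 0 := by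
      rw [Ne, ZMod.natCast_eq_zero_iff]
      intro h
      have := Nat.le_of_dvd (by norm_num) h
      omega
    simpa using this
  have h3 : (3 : ZMod p) ≠ 0 := by
    have : ((3 : ℕ) : ZMod p) ≠ 0 := by
      rw [Ne, ZMod.natCast_eq_zero_iff]
      intro h
      have := Nat.le_of_dvd (by norm_num) h
      omega
    simpa using this
  -- The sixth iterate of the Ducci map in closed form.
  have h6 : ∀ x y z : ZMod p, (ducci3 p)^[6] (x, y, z) =
      (22*x + 21*y + 21*z, 21*x + 22*y + 21*z, 21*x + 21*y + 22*z) := by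
    intro x y z
    show ducci3 p (ducci3 p (ducci3 p (ducci3 p (ducci3 p (ducci3 p (x, y, z)))))) = _
    simp only [ducci3, Prod.mk.injEq]
    refine ⟨by ring, by ring, by ring⟩
  -- Closed form of the iterates of (0,0,1) at multiples of 6.
  have key : ∀ m : ℕ, ∃ t : ZMod p,
      (ducci3 p)^[6*m] (0, 0, 1) = (t, t, t + 1) ∧ 3*t = 64^m - 1 := by
    intro m
    induction m with
    | zero => exact ⟨0, by norm_num, by norm_num⟩
    | succ n ih =>
      obtain ⟨t, h1, ht⟩ := ih
      refine ⟨t + 21*(3*t + 1), ?_, ?_⟩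
      · have e : 6*(n+1) = 6 + 6*n := by ring
        rw [e, Function.iterate_add_apply, h1, h6]
        simp only [Prod.mk.injEq]
        refine ⟨by ring, by ring, by ring⟩
      · have e : (64 : ZMod p)^(n+1) = 64 * 64^n := by ring
        rw [e]
        linear_combination (64 : ZMod p) * ht
  obtain ⟨m, hm⟩ : ∃ m, p - 1 = 6 * m := ⟨(p - 1)/6, by omega⟩
  obtain ⟨t, h1, ht⟩ := key m
  have h64 : (64 : ZMod p)^m = 1 := by
    have e : (64 : ZMod p) = 2^6 := by norm_num
    rw [e, ← pow_mul, ← hm, ZMod.pow_card_sub_one_eq_one h2]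
  have ht0 : t = 0 := by
    have h30 : 3*t = 0 := by rw [ht, h64]; ring
    rcases mul_eq_zero.mp h30 with h | h
    · exact absurd h h3
    · exact h
  have hfix : (ducci3 p)^[p - 1] (0, 0, 1) = (0, 0, 1) := by
    rw [hm, h1, ht0]; norm_num
  refine ⟨hfix, ?_⟩
  intro k hk
  obtain ⟨⟨hkpos, l, hl⟩, hmin⟩ := hk
  have hiter : ∀ n, (ducci3 p)^[(p-1)*n] (0, 0, 1) = (0, 0, 1) := by
    intro n
    rw [Function.iterate_mul]
    exact Function.iterate_fixed hfix n
  -- First show that k is a genuine period of (0,0,1).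
  have hk0 : (ducci3 p)^[k] (0, 0, 1) = (0, 0, 1) := by
    have happ : (ducci3 p)^[(p-1)*l - l] ((ducci3 p)^[l + k] (0, 0, 1)) =
        (ducci3 p)^[(p-1)*l - l] ((ducci3 p)^[l] (0, 0, 1)) := by rw [hl]
    rw [← Function.iterate_add_apply, ← Function.iterate_add_apply] at happ
    have hle : l ≤ (p-1)*l := Nat.le_mul_of_pos_left l (by omega)
    have e1 : (p-1)*l - l + (l + k) = k + (p-1)*l := by omega
    have e2 : (p-1)*l - l + l = (p-1)*l := by omega
    rw [e1, e2, hiter l, Function.iterate_add_apply, hiter l] at happ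
    exact happ
  -- Now divide p-1 by k.
  by_contra hndvd
  have hrpos : 0 < (p-1) % k := Nat.pos_of_ne_zero fun h => hndvd (Nat.dvd_of_mod_eq_zero h)
  have hrk : (p-1) % k < k := Nat.mod_lt _ hkpos
  have hr : (ducci3 p)^[(p-1) % k] (0, 0, 1) = (0, 0, 1) := by
    have e : p - 1 = (p-1) % k + k * ((p-1)/k) := by
      rw [Nat.add_comm, Nat.div_add_mod]
    have := hfix
    rw [e, Function.iterate_add_apply, Function.iterate_mul,
      Function.iterate_fixed hk0] at this
    exact this
  have hle := hmin ⟨hrpos, 0, by simpa using hr⟩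
  omega
end

section
/- Let p be a prime with p ≡ 5 mod 6. Then D^{3(p-1)}(0,0,1) = (0,0,1) in (Z/pZ)^3; consequently P_p(3) divides 3(p-1). -/
lemma ducci3_apply (m : ℕ) (x y z : ZMod m) :
    ducci3 m (x, y, z) = (x + y, y + z, z + x) := rfl

lemma ducci3_six (m : ℕ) (x y z : ZMod m) :
    (ducci3 m)^[6] (x, y, z) =
      (x + 21 * (x + y + z), y + 21 * (x + y + z), z + 21 * (x + y + z)) := by
  simp only [Function.iterate_succ, Function.iterate_zero, Function.comp_apply, id_eq,
    ducci3_apply, Prod.mk.injEq]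
  refine ⟨by ring, by ring, by ring⟩

lemma ducci3_iter_six (p : ℕ) (k : ℕ) :
    ∃ t : ZMod p, 3 * t = 2 ^ (6 * k) - 1 ∧
      (ducci3 p)^[6 * k] (0, 0, 1) = (t, t, 1 + t) := by
  induction k with
  | zero => exact ⟨0, by simp, by simp⟩
  | succ k ih =>
    obtain ⟨t, ht, hv⟩ := ih
    refine ⟨t + 21 * 2 ^ (6 * k), ?_, ?_⟩
    · rw [show 6 * (k + 1) = 6 * k + 6 by ring, pow_add]
      linear_combination ht
    · rw [show 6 * (k + 1) = 6 + 6 * k by ring, Function.iterate_add_apply, hv, ducci3_six,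
        Prod.mk.injEq, Prod.mk.injEq]
      refine ⟨by linear_combination 21 * ht, by linear_combination 21 * ht,
        by linear_combination 21 * ht⟩

theorem period_dvd_three_p_sub_one (p : ℕ) (hp : p.Prime) (hp5 : p % 6 = 5) :
    (ducci3 p)^[3 * (p - 1)] (0, 0, 1) = (0, 0, 1) ∧
      ∀ k : ℕ, IsLeast {k : ℕ | 0 < k ∧
          ∃ l, (ducci3 p)^[l + k] (0, 0, 1) = (ducci3 p)^[l] (0, 0, 1)} k →
        k ∣ 3 * (p - 1) := by
  haveI : Fact p.Prime := ⟨hp⟩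
  have hp5' : 5 ≤ p := by omega
  have h2 : (2 : ZMod p) ≠ 0 := by
    have : ((2 : ℕ) : ZMod p) = 0 ↔ p ∣ 2 := ZMod.natCast_eq_zero_iff 2 p
    intro h
    have hpd : p ∣ 2 := this.mp (by exact_mod_cast h)
    have := Nat.le_of_dvd (by norm_num) hpd
    omega
  have h3 : (3 : ZMod p) ≠ 0 := by
    have : ((3 : ℕ) : ZMod p) = 0 ↔ p ∣ 3 := ZMod.natCast_eq_zero_iff 3 p
    intro h
    have hpd : p ∣ 3 := this.mp (by exact_mod_cast h)
    have := Nat.le_of_dvd (by norm_num) hpd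
    interval_cases p
  have hpo : 3 * (p - 1) = 6 * ((p - 1) / 2) := by omega
  obtain ⟨t, ht, hv⟩ := ducci3_iter_six p ((p - 1) / 2)
  have h2p : (2 : ZMod p) ^ (6 * ((p - 1) / 2)) = 1 := by
    rw [← hpo, show 3 * (p - 1) = (p - 1) * 3 by ring, pow_mul,
      ZMod.pow_card_sub_one_eq_one h2, one_pow]
  have ht0 : t = 0 := by
    rw [h2p, sub_self] at ht
    rcases mul_eq_zero.mp ht with h | h
    · exact absurd h h3
    · exact h
  have h1 : (ducci3 p)^[3 * (p - 1)] (0, 0, 1) = (0, 0, 1) := by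
    rw [hpo, hv, ht0]; simp
  refine ⟨h1, ?_⟩
  have hinj : Function.Injective (ducci3 p) := by
    rintro ⟨x, y, z⟩ ⟨x', y', z'⟩ h
    simp only [ducci3_apply, Prod.mk.injEq] at h ⊢
    obtain ⟨e1, e2, e3⟩ := h
    refine ⟨?_, ?_, ?_⟩
    · exact mul_left_cancel₀ h2 (by linear_combination e1 - e2 + e3)
    · exact mul_left_cancel₀ h2 (by linear_combination e1 + e2 - e3)
    · exact mul_left_cancel₀ h2 (by linear_combination - e1 + e2 + e3)
  intro k hk
  obtain ⟨hmem, hlb⟩ := hk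
  obtain ⟨hkpos, l, hl⟩ := hmem
  have hfk : (ducci3 p)^[k] (0, 0, 1) = (0, 0, 1) := by
    apply hinj.iterate l
    rw [← Function.iterate_add_apply]
    exact hl
  have hmulk : (ducci3 p)^[k * (3 * (p - 1) / k)] (0, 0, 1) = (0, 0, 1) := by
    rw [Function.iterate_mul]
    exact Function.iterate_fixed hfk _
  have hr : (ducci3 p)^[3 * (p - 1) % k] (0, 0, 1) = (0, 0, 1) := by
    have e : 3 * (p - 1) = 3 * (p - 1) % k + k * (3 * (p - 1) / k) := by
      have := Nat.mod_add_div (3 * (p - 1)) k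
      omega
    rw [e, Function.iterate_add_apply, hmulk] at h1
    exact h1
  rcases Nat.eq_zero_or_pos (3 * (p - 1) % k) with h0 | hpos'
  · exact Nat.dvd_of_mod_eq_zero h0
  · exfalso
    have hle : k ≤ 3 * (p - 1) % k := hlb ⟨hpos', 0, by simpa using hr⟩
    have hlt : 3 * (p - 1) % k < k := Nat.mod_lt _ hkpos
    omega
end

section
/- Let b_r be the Ducci coefficient sequence for n=3 (b_0=0 with a_0=1, c_0=0 and recursions a_{r+1}=a_r+c_r, b_{r+1}=b_r+a_r, c_{r+1}=c_r+b_r). If k ≡ 0 mod 6 and r_1, r_2 ≡ 0 mod 6, then b_{r_1+r_2} = 3 b_{r_1} b_{r_2} + b_{r_1} + b_{r_2}; consequently for j ≥ 1, b_{jk} = Σ_{i=0}^{j-1} 3^{j-i-1} C(j, j-i) b_k^{j-i}. -/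
theorem ducci_b_multiplication (a b c : ℕ → ℤ)
    (ha0 : a 0 = 1) (hb0 : b 0 = 0) (hc0 : c 0 = 0)
    (ha : ∀ r, a (r + 1) = a r + c r)
    (hb : ∀ r, b (r + 1) = b r + a r)
    (hc : ∀ r, c (r + 1) = c r + b r) :
    (∀ r₁ r₂ : ℕ, r₁ % 6 = 0 → r₂ % 6 = 0 →
        b (r₁ + r₂) = 3 * b r₁ * b r₂ + b r₁ + b r₂) ∧
      ∀ k j : ℕ, k % 6 = 0 → 1 ≤ j →
        b (j * k) = ∑ i ∈ Finset.range j,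
          (3 : ℤ) ^ (j - i - 1) * (j.choose (j - i) : ℤ) * b k ^ (j - i) := by
  -- addition formulas
  have key : ∀ r₂ r₁ : ℕ,
      a (r₁ + r₂) = a r₁ * a r₂ + c r₁ * b r₂ + b r₁ * c r₂ ∧
      b (r₁ + r₂) = b r₁ * a r₂ + a r₁ * b r₂ + c r₁ * c r₂ ∧
      c (r₁ + r₂) = c r₁ * a r₂ + b r₁ * b r₂ + a r₁ * c r₂ := by
    intro r₂
    induction r₂ with
    | zero => intro r₁; simp [ha0, hb0, hc0]
    | succ n ih =>
      intro r₁
      obtain ⟨h1, h2, h3⟩ := ih r₁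
      rw [show r₁ + (n + 1) = (r₁ + n) + 1 by omega]
      simp only [ha, hb, hc, h1, h2, h3]
      refine ⟨by ring, by ring, by ring⟩
  -- values at multiples of 6
  have six : ∀ m : ℕ, a (6 * m) = b (6 * m) + 1 ∧ c (6 * m) = b (6 * m) := by
    intro m
    induction m with
    | zero => simp [ha0, hb0, hc0]
    | succ n ih =>
      obtain ⟨i1, i2⟩ := ih
      have ha6 : a 6 = 22 := by
        rw [show (6:ℕ) = 0+1+1+1+1+1+1 from rfl]
        simp [ha, hb, hc, ha0, hb0, hc0]
      have hb6 : b 6 = 21 := by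
        rw [show (6:ℕ) = 0+1+1+1+1+1+1 from rfl]
        simp [ha, hb, hc, ha0, hb0, hc0]
      have hc6 : c 6 = 21 := by
        rw [show (6:ℕ) = 0+1+1+1+1+1+1 from rfl]
        simp [ha, hb, hc, ha0, hb0, hc0]
      obtain ⟨k1, k2, k3⟩ := key 6 (6 * n)
      rw [show 6 * (n + 1) = 6 * n + 6 by ring]
      rw [k1, k2, k3, ha6, hb6, hc6, i1, i2]
      constructor <;> ring
  have part1 : ∀ r₁ r₂ : ℕ, r₁ % 6 = 0 → r₂ % 6 = 0 →
      b (r₁ + r₂) = 3 * b r₁ * b r₂ + b r₁ + b r₂ := by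
    intro r₁ r₂ h₁ h₂
    obtain ⟨m₁, rfl⟩ : ∃ m, r₁ = 6 * m := ⟨r₁ / 6, by omega⟩
    obtain ⟨m₂, rfl⟩ : ∃ m, r₂ = 6 * m := ⟨r₂ / 6, by omega⟩
    obtain ⟨s1, s2⟩ := six m₁
    obtain ⟨t1, t2⟩ := six m₂
    obtain ⟨-, k2, -⟩ := key (6 * m₂) (6 * m₁)
    rw [k2, s1, s2, t1, t2]; ring
  refine ⟨part1, ?_⟩
  have main : ∀ k, k % 6 = 0 → ∀ j : ℕ,
      3 * b (j * k) + 1 = (3 * b k + 1) ^ j := by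
    intro k hk j
    induction j with
    | zero => simp [hb0]
    | succ n ih =>
      have hjk : n * k % 6 = 0 := by
        obtain ⟨t, rfl⟩ : ∃ t, k = 6 * t := ⟨k / 6, by omega⟩
        rw [show n * (6 * t) = 6 * (n * t) by ring]
        exact Nat.mul_mod_right _ _
      have h := part1 (n * k) k hjk hk
      rw [show (n + 1) * k = n * k + k by ring, h, pow_succ, ← ih]
      ring
  intro k j hk hj
  have hmb := main k hk j
  -- rewrite the sum
  have hsum : ∑ i ∈ Finset.range j,
      (3 : ℤ) ^ (j - i - 1) * (j.choose (j - i) : ℤ) * b k ^ (j - i)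
      = ∑ i ∈ Finset.range j,
      (3 : ℤ) ^ i * (j.choose (i + 1) : ℤ) * b k ^ (i + 1) := by
    rw [← Finset.sum_range_reflect]
    refine Finset.sum_congr rfl ?_
    intro i hi
    have hij : i < j := Finset.mem_range.mp hi
    rw [show j - (j - 1 - i) = i + 1 by omega, Nat.add_sub_cancel]
  rw [hsum]
  have hbin : (3 * b k + 1) ^ j
      = (∑ i ∈ Finset.range j, (3 * b k) ^ (i + 1) * (j.choose (i + 1) : ℤ)) + 1 := by
    have := add_pow (3 * b k) 1 j
    simp only [one_pow, mul_one] at this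
    rw [this, Finset.sum_range_succ']
    simp
  have h3 : 3 * ∑ i ∈ Finset.range j,
      (3 : ℤ) ^ i * (j.choose (i + 1) : ℤ) * b k ^ (i + 1)
      = ∑ i ∈ Finset.range j, (3 * b k) ^ (i + 1) * (j.choose (i + 1) : ℤ) := by
    rw [Finset.mul_sum]
    refine Finset.sum_congr rfl ?_
    intro i _
    rw [mul_pow]
    ring
  rw [hbin, ← h3] at hmb
  linarith
end
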